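/- arXiv:2512.22598 — 6 statements merged into one kernel-verified Lean document; each statement's English description precedes it below -/
import Mathlib

section
/- There do not exist real numbers λ₁ ≤ λ₂ ≤ 0 and λ₄ ≥ H and real constants H > 0, R > 0 such that λ₁ + λ₂ + λ₄ = 4H and λ₁λ₂ + λ₁λ₄ + λ₂λ₄ = 6R. (In other words, if λ₃ = 0 in the limit of principal curvatures of a 4-dimensional CMC hypersurface with R > 0, one derives the contradiction λ₂ > 0.) -/
theorem stmt_4 :
    ¬ ∃ (l1 l2 l4 H R : ℝ), l1 ≤ l2 ∧ l2 ≤ 0 ∧ H ≤ l4 ∧ 0 < H ∧ 0 < R ∧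
      l1 + l2 + l4 = 4 * H ∧ l1 * l2 + l1 * l4 + l2 * l4 = 6 * R := by
  rintro ⟨l1, l2, l4, H, R, h12, h20, hH4, hH, hR, hs, hq⟩
  nlinarith [mul_nonneg (neg_nonneg.2 (h12.trans h20)) (neg_nonneg.2 h20),
    mul_nonpos_of_nonpos_of_nonneg h20 (hH.le.trans hH4),
    mul_nonpos_of_nonpos_of_nonneg (h12.trans h20) (hH.le.trans hH4)]
end

section
/- Let λ₁ ≤ λ₂ ≤ 0 < λ₃ ≤ λ₄ be real numbers with λ₁ + λ₂ + λ₃ + λ₄ = 4H, H > 0, and ∑_{i<j} λᵢλⱼ = 6R where R = (2/3)H². Then the third elementary symmetric function satisfies σ₃(λ₁,λ₂,λ₃,λ₄) ≥ 0. -/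
theorem stmt_6 (l1 l2 l3 l4 H R : ℝ)
    (h12 : l1 ≤ l2) (h2 : l2 ≤ 0) (h3 : 0 < l3) (h34 : l3 ≤ l4)
    (hH : 0 < H) (hsum : l1 + l2 + l3 + l4 = 4 * H)
    (hR : R = (2 / 3) * H ^ 2)
    (hσ2 : l1 * l2 + l1 * l3 + l1 * l4 + l2 * l3 + l2 * l4 + l3 * l4 = 6 * R) :
    0 ≤ l1 * l2 * l3 + l1 * l2 * l4 + l1 * l3 * l4 + l2 * l3 * l4 := by
  subst hR
  have h1 : l1 ≤ 0 := h12.trans h2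
  have ht : 0 ≤ -(l1 + l2) := by linarith
  set t : ℝ := -(l1 + l2) with htdef
  have hb : l3 + l4 = 4 * H + t := by simp [htdef]; linarith
  have hS : l1 * l2 + l3 * l4 = 4 * H ^ 2 + 4 * H * t + t ^ 2 := by
    have : (l1 + l2) * (l3 + l4) = -t * (4 * H + t) := by rw [hb, htdef]; ring
    nlinarith [this]
  have hplb : l1 * l2 ≥ 2 * H * t + 3 / 4 * t ^ 2 := by
    nlinarith [sq_nonneg (l3 - l4)]
  have hpos : (0:ℝ) ≤ 4 * H + 2 * t := by linarith
  have key : 0 ≤ (l1 * l2 - (2 * H * t + 3 / 4 * t ^ 2)) * (4 * H + 2 * t) :=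
    mul_nonneg (by linarith) hpos
  have hid : l1 * l2 * l3 + l1 * l2 * l4 + l1 * l3 * l4 + l2 * l3 * l4
      = l1 * l2 * (4 * H + 2 * t) - (4 * H ^ 2 + 4 * H * t + t ^ 2) * t := by
    have h4 : l3 * l4 = 4 * H ^ 2 + 4 * H * t + t ^ 2 - l1 * l2 := by linarith
    calc l1 * l2 * l3 + l1 * l2 * l4 + l1 * l3 * l4 + l2 * l3 * l4
        = l1 * l2 * (l3 + l4) + l3 * l4 * (l1 + l2) := by ring
      _ = l1 * l2 * (4 * H + t) + (4 * H ^ 2 + 4 * H * t + t ^ 2 - l1 * l2) * (-t) := by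
          rw [hb, h4, htdef]; ring
      _ = l1 * l2 * (4 * H + 2 * t) - (4 * H ^ 2 + 4 * H * t + t ^ 2) * t := by ring
  rw [hid]
  nlinarith [key, mul_nonneg (mul_nonneg ht ht) ht, mul_nonneg (mul_nonneg ht ht) hH.le,
    mul_nonneg (mul_nonneg hH.le hH.le) ht]
end

section
/- Let H > 0 and let λ₁ ≤ λ₂ ≤ λ₃ = λ₄ = 0 ≤ λ₅ be real numbers with λ₅ ≥ H, σ₁ = 5H, σ₂ = 10R ≥ (25/4)H², and every product of four of the λᵢ ≥ 0; then necessarily σ₂(λ₂,λ₃,λ₄,λ₅) < 0, which contradicts the inequality λ² − 5Hλ + 10R ≥ 0 at λ = λ₁, so no such λ₁, ..., λ₅ exist. -/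
/-- With `λ₃ = λ₄ = 0`, the conditions `λ₁ ≤ λ₂ ≤ 0 ≤ λ₅`, `λ₅ ≥ H > 0`,
`σ₁ = 5H`, `σ₂ = 10R ≥ (25/4)H²` (i.e. `R ≥ (5/8)H²`), and all products
of four of the principal curvatures nonnegative, are contradictory. -/
theorem stmt_9 :
    ¬ ∃ (l1 l2 l5 H R : ℝ), l1 ≤ l2 ∧ l2 ≤ 0 ∧ 0 ≤ l5 ∧ H ≤ l5 ∧ 0 < H ∧
      (5 / 8) * H ^ 2 ≤ R ∧
      l1 + l2 + 0 + 0 + l5 = 5 * H ∧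
      l1 * l2 + l1 * 0 + l1 * 0 + l1 * l5 + l2 * 0 + l2 * 0 + l2 * l5 +
        0 * 0 + 0 * l5 + 0 * l5 = 10 * R ∧
      0 ≤ l1 * l2 * 0 * 0 ∧ 0 ≤ l1 * l2 * 0 * l5 ∧ 0 ≤ l1 * l2 * 0 * l5 ∧
      0 ≤ l1 * 0 * 0 * l5 ∧ 0 ≤ l2 * 0 * 0 * l5 := by
  rintro ⟨l1, l2, l5, H, R, h12, h20, h5, hH5, hH, hR, hs1, hs2, -⟩
  have hsum : l1 + l2 ≤ 0 := by linarith
  have h5' : 5 * H ≤ l5 := by linarith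
  nlinarith [sq_nonneg (l1 - l2), sq_nonneg (l1 + l2), mul_nonneg (neg_nonneg.2 hsum) (by linarith : (0:ℝ) ≤ l5 - 5 * H), sq_nonneg H, mul_pos hH hH]
end

section
/- Let λ₁ ≤ λ₂ ≤ λ₃ ≤ λ₄ = 0 < λ₅ ≤ λ₆ be real numbers with λ₁+⋯+λ₆ = 6H, H > 0, σ₂(λ) = 15R with R ≥ (3/5)H², σ₅(λ₁,…,λ₆) = 0, and ∑_{1≤i<j≤6}(λᵢ−λⱼ)²λᵢλⱼ ≤ 0. Then λ₁ = λ₂ = λ₃ = λ₄ = 0, λ₅ = λ₆ = 3H, and R = (3/5)H². -/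
/-!
Since `λ₄ = 0`, the only surviving term of `σ₅` is `λ₁λ₂λ₃λ₅λ₆`, so `σ₅ = 0` forces `λ₃ = 0`
(otherwise `λ₁, λ₂, λ₃ < 0` and the product is nonzero). With `σ₂ = ((∑ λ)² - ∑ λ²) / 2` the
hypotheses `∑ λ = 6H`, `σ₂ ≥ 9H²` become `2 ∑ λ² ≤ (∑ λ)²` for the four remaining entries
`λ₁, λ₂ ≤ 0 < λ₅, λ₆`, which is only possible when `λ₁ = λ₂ = 0` and `λ₅ = λ₆`.
-/

/-- the `r`-th elementary symmetric function -/
def esym {n : ℕ} (x : Fin n → ℝ) (r : ℕ) : ℝ :=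
  ∑ t ∈ (Finset.univ : Finset (Fin n)).powersetCard r, ∏ i ∈ t, x i

open Finset MvPolynomial

lemma esym_eq_eval_esymm {n : ℕ} (x : Fin n → ℝ) (r : ℕ) :
    esym x r = eval x (esymm (Fin n) ℝ r) := by
  simp [esym, esymm]

lemma two_mul_esym_two {n : ℕ} (x : Fin n → ℝ) :
    2 * esym x 2 = (∑ i, x i) ^ 2 - ∑ i, x i ^ 2 := by
  have newton := mul_esymm_eq_sum (Fin n) ℝ 2
  rw [show {a ∈ antidiagonal 2 | a.1 < 2} = {(0, 2), (1, 1)} from rfl, sum_pair (by decide),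
    esymm_zero, esymm_one] at newton
  have h := congrArg (eval x) newton
  simp only [psum, map_mul, map_add, map_neg, map_pow, map_one, map_sum, eval_X, map_natCast,
    pow_one] at h
  rw [esym_eq_eval_esymm]
  linear_combination h

lemma esym_eq_prod_succAbove_of_eq_zero {n : ℕ} (x : Fin (n + 1) → ℝ) {i : Fin (n + 1)}
    (hi : x i = 0) : esym x n = ∏ j, x (i.succAbove j) := by
  have hcard : #({i}ᶜ : Finset (Fin (n + 1))) = n := by simp [card_compl]
  rw [esym, Finset.sum_eq_single {i}ᶜ]
  · rw [← Fin.image_succAbove_univ, prod_image Fin.succAbove_right_injective.injOn]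
  · intro t ht hne
    refine prod_eq_zero (by_contra fun hit => hne ?_) hi
    rw [mem_powersetCard] at ht
    exact eq_of_subset_of_card_le (fun j hj => mem_compl.2 fun h => hit (mem_singleton.1 h ▸ hj))
      (hcard.trans ht.2.symm).le
  · exact fun h => absurd (mem_powersetCard.2 ⟨subset_univ _, hcard⟩) h

lemma eq_zero_of_two_mul_sum_sq_le_sq_sum {a b e f : ℝ} (ha : a ≤ 0) (hb : b ≤ 0) (he : 0 < e)
    (hf : 0 < f) (h : 2 * (a ^ 2 + b ^ 2 + e ^ 2 + f ^ 2) ≤ (a + b + e + f) ^ 2) :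
    a = 0 ∧ b = 0 ∧ e = f := by
  -- `(a + b + e + f) ^ 2 - 2 * (a ^ 2 + b ^ 2 + e ^ 2 + f ^ 2)
  --   = 2 * (a + b) * (e + f) - (a - b) ^ 2 - (e - f) ^ 2`, and every term on the right is `≤ 0`.
  have hsplit : (a - b) ^ 2 + (e - f) ^ 2 + 2 * (-(a + b) * (e + f)) ≤ 0 := by linarith
  have hab : a - b = 0 := by nlinarith [sq_nonneg (a - b), sq_nonneg (e - f)]
  have hef : e - f = 0 := by nlinarith [sq_nonneg (a - b), sq_nonneg (e - f)]
  have hs : a + b = 0 := by nlinarith [sq_nonneg (a - b), sq_nonneg (e - f)]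
  exact ⟨by linarith, by linarith, by linarith⟩

theorem stmt_13_general (l : Fin 6 → ℝ) (H R : ℝ)
    (h01 : l 0 ≤ l 1) (h12 : l 1 ≤ l 2) (h23 : l 2 ≤ l 3) (h3 : l 3 = 0) (h4 : 0 < l 4)
    (h45 : l 4 ≤ l 5)
    (hsum : ∑ i, l i = 6 * H)
    (hR : esym l 2 = 15 * R) (hRge : (3 / 5) * H ^ 2 ≤ R)
    (hσ5 : esym l 5 = 0) :
    l 0 = 0 ∧ l 1 = 0 ∧ l 2 = 0 ∧ l 3 = 0 ∧ l 4 = 3 * H ∧ l 5 = 3 * H ∧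
    R = (3 / 5) * H ^ 2 := by
  have h5 : 0 < l 5 := h4.trans_le h45
  have hprod : l 0 * l 1 * l 2 * l 4 * l 5 = 0 := by
    rw [← hσ5, esym_eq_prod_succAbove_of_eq_zero l h3, Fin.prod_univ_five]
    rfl
  have h2 : l 2 = 0 := by
    by_contra hne
    have hneg : l 2 < 0 := lt_of_le_of_ne (h3 ▸ h23) hne
    have h01pos : 0 < l 0 * l 1 := mul_pos_of_neg_of_neg (by linarith) (by linarith)
    exact hprod.not_lt (mul_neg_of_neg_of_pos (mul_neg_of_neg_of_pos
      (mul_neg_of_pos_of_neg h01pos hneg) h4) h5)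
  rw [Fin.sum_univ_six, h2, h3] at hsum
  have hσ2 := two_mul_esym_two l
  rw [Fin.sum_univ_six, Fin.sum_univ_six, h2, h3, hR] at hσ2
  obtain ⟨h0, h1, h4_eq_5⟩ := eq_zero_of_two_mul_sum_sq_le_sq_sum (h01.trans (h12.trans h2.le))
    (h12.trans h2.le) h4 h5 (by nlinarith)
  have hl4 : l 4 = 3 * H := by linarith
  rw [h0, h1, ← h4_eq_5, hl4] at hσ2
  exact ⟨h0, h1, h2, h3, hl4, by linarith, by linarith⟩

theorem stmt_13 (l : Fin 6 → ℝ) (H R : ℝ)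
    (h01 : l 0 ≤ l 1) (h12 : l 1 ≤ l 2) (h23 : l 2 ≤ l 3) (h3 : l 3 = 0) (h4 : 0 < l 4)
    (h45 : l 4 ≤ l 5)
    (hH : 0 < H) (hsum : ∑ i, l i = 6 * H)
    (hR : esym l 2 = 15 * R) (hRge : (3 / 5) * H ^ 2 ≤ R)
    (hσ5 : esym l 5 = 0)
    (hSimons : ∑ i, ∑ j ∈ Finset.univ.filter (fun j => i < j),
      (l i - l j) ^ 2 * (l i * l j) ≤ 0) :
    l 0 = 0 ∧ l 1 = 0 ∧ l 2 = 0 ∧ l 3 = 0 ∧ l 4 = 3 * H ∧ l 5 = 3 * H ∧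
    R = (3 / 5) * H ^ 2 :=
  stmt_13_general l H R h01 h12 h23 h3 h4 h45 hsum hR hRge hσ5
end

section
/- Let λ₁ ≤ λ₂ ≤ λ₃ = 0 < λ₄ ≤ λ₅ ≤ λ₆ be real numbers with λ₁+⋯+λ₆ = 6H, H > 0, σ₅(λ) = 0, σ₄(λ) ≥ 0, and ∑_{1≤i<j≤6}(λᵢ−λⱼ)²λᵢλⱼ ≤ 0. Then λ₁ = λ₂ = λ₃ = 0, λ₄ = λ₅ = λ₆ = 2H, and R := (1/15)σ₂(λ) = (4/5)H². -/
namespace Multiset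

variable {R : Type*} [CommSemiring R]

theorem esymm_zero_right (s : Multiset R) : s.esymm 0 = 1 := by
  simp [esymm, powersetCard_zero_left]

theorem esymm_zero_succ (k : ℕ) : (0 : Multiset R).esymm (k + 1) = 0 := by
  simp [esymm, powersetCard_zero_right]

theorem esymm_cons_succ (a : R) (s : Multiset R) (k : ℕ) :
    (a ::ₘ s).esymm (k + 1) = a * s.esymm k + s.esymm (k + 1) := by
  simp [esymm, powersetCard_cons, map_map, sum_map_mul_left, add_comm]

end Multiset

theorem esym_eq_esymm_ofFn {n : ℕ} (x : Fin n → ℝ) (r : ℕ) :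
    esym x r = (List.ofFn x : Multiset ℝ).esymm r := by
  rw [esym, ← Finset.esymm_map_val, Fin.univ_val_map]

section FinSix

variable (l : Fin 6 → ℝ)

theorem esym_fin_six (r : ℕ) :
    esym l r = (l 0 ::ₘ l 1 ::ₘ l 2 ::ₘ l 3 ::ₘ l 4 ::ₘ l 5 ::ₘ 0).esymm r := by
  rw [esym_eq_esymm_ofFn]
  rfl

theorem esym_five_of_two_eq_zero (h2 : l 2 = 0) : esym l 5 = l 0 * l 1 * l 3 * l 4 * l 5 := by
  simp only [esym_fin_six, Multiset.esymm_cons_succ, Multiset.esymm_zero_right,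
    Multiset.esymm_zero_succ, h2]
  ring

theorem esym_four_of_one_two_eq_zero (h1 : l 1 = 0) (h2 : l 2 = 0) :
    esym l 4 = l 0 * l 3 * l 4 * l 5 := by
  simp only [esym_fin_six, Multiset.esymm_cons_succ, Multiset.esymm_zero_right,
    Multiset.esymm_zero_succ, h1, h2]
  ring

theorem esym_two_of_zero_one_two_eq_zero (h0 : l 0 = 0) (h1 : l 1 = 0) (h2 : l 2 = 0) :
    esym l 2 = l 3 * l 4 + l 3 * l 5 + l 4 * l 5 := by
  simp only [esym_fin_six, Multiset.esymm_cons_succ, Multiset.esymm_zero_right,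
    Multiset.esymm_zero_succ, h0, h1, h2]
  ring

end FinSix

theorem eq_of_sum_sq_sub_mul_mul_nonpos {ι : Type*} [Fintype ι] [LinearOrder ι] {l : ι → ℝ}
    (hl : ∀ i, 0 ≤ l i)
    (h : ∑ i, ∑ j ∈ Finset.univ.filter (fun j => i < j), (l i - l j) ^ 2 * (l i * l j) ≤ 0)
    {i j : ι} (hij : i < j) (hi : 0 < l i) (hj : 0 < l j) : l i = l j := by
  have hterm : ∀ i j, 0 ≤ (l i - l j) ^ 2 * (l i * l j) := fun i j =>
    mul_nonneg (sq_nonneg _) (mul_nonneg (hl i) (hl j))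
  have hinner : ∀ i,
      0 ≤ ∑ j ∈ Finset.univ.filter (fun j => i < j), (l i - l j) ^ 2 * (l i * l j) :=
    fun i => Finset.sum_nonneg fun j _ => hterm i j
  have hzero := (Finset.sum_eq_zero_iff_of_nonneg fun i _ => hinner i).1
    (le_antisymm h (Finset.sum_nonneg fun i _ => hinner i)) i (Finset.mem_univ i)
  have hij0 := (Finset.sum_eq_zero_iff_of_nonneg fun j _ => hterm i j).1 hzero j
    (by simpa using hij)
  simpa [sub_eq_zero, hi.ne', hj.ne'] using hij0

theorem stmt_14_general (l : Fin 6 → ℝ) (H : ℝ)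
    (h01 : l 0 ≤ l 1) (h12 : l 1 ≤ l 2) (h2 : l 2 = 0) (h3 : 0 < l 3)
    (h34 : l 3 ≤ l 4) (h45 : l 4 ≤ l 5)
    (hsum : ∑ i, l i = 6 * H)
    (hσ5 : esym l 5 = 0) (hσ4 : 0 ≤ esym l 4)
    (hSimons : ∑ i, ∑ j ∈ Finset.univ.filter (fun j => i < j),
      (l i - l j) ^ 2 * (l i * l j) ≤ 0) :
    l 0 = 0 ∧ l 1 = 0 ∧ l 2 = 0 ∧ l 3 = 2 * H ∧ l 4 = 2 * H ∧ l 5 = 2 * H ∧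
    (1 / 15) * esym l 2 = (4 / 5) * H ^ 2 := by
  have h4 : 0 < l 4 := h3.trans_le h34
  have h5 : 0 < l 5 := h4.trans_le h45
  have hpos : 0 < l 3 * l 4 * l 5 := by positivity
  have h1 : l 1 = 0 := by
    have h01prod : l 0 * l 1 * (l 3 * l 4 * l 5) = 0 := by
      linarith [esym_five_of_two_eq_zero l h2]
    rcases mul_eq_zero.1 ((mul_eq_zero.1 h01prod).resolve_right hpos.ne') with h0 | h1
    · linarith
    · exact h1
  have h0 : l 0 = 0 := by
    have h0prod : 0 ≤ l 0 * (l 3 * l 4 * l 5) := by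
      linarith [esym_four_of_one_two_eq_zero l h1 h2]
    exact le_antisymm (h01.trans h1.le) (nonneg_of_mul_nonneg_left h0prod hpos)
  have hl : ∀ i, 0 ≤ l i := by
    intro i; fin_cases i <;> simp [h0, h1, h2] <;> positivity
  have e34 := eq_of_sum_sq_sub_mul_mul_nonpos hl hSimons (by decide : (3 : Fin 6) < 4) h3 h4
  have e45 := eq_of_sum_sq_sub_mul_mul_nonpos hl hSimons (by decide : (4 : Fin 6) < 5) h4 h5
  rw [Fin.sum_univ_six, h0, h1, h2] at hsum
  have h3H : l 3 = 2 * H := by linarith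
  refine ⟨h0, h1, h2, h3H, by linarith, by linarith, ?_⟩
  rw [esym_two_of_zero_one_two_eq_zero l h0 h1 h2, ← e45, ← e34, h3H]
  ring

theorem stmt_14 (l : Fin 6 → ℝ) (H : ℝ)
    (h01 : l 0 ≤ l 1) (h12 : l 1 ≤ l 2) (h2 : l 2 = 0) (h3 : 0 < l 3)
    (h34 : l 3 ≤ l 4) (h45 : l 4 ≤ l 5)
    (hH : 0 < H) (hsum : ∑ i, l i = 6 * H)
    (hσ5 : esym l 5 = 0) (hσ4 : 0 ≤ esym l 4)
    (hSimons : ∑ i, ∑ j ∈ Finset.univ.filter (fun j => i < j),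
      (l i - l j) ^ 2 * (l i * l j) ≤ 0) :
    l 0 = 0 ∧ l 1 = 0 ∧ l 2 = 0 ∧ l 3 = 2 * H ∧ l 4 = 2 * H ∧ l 5 = 2 * H ∧
    (1 / 15) * esym l 2 = (4 / 5) * H ^ 2 :=
  stmt_14_general l H h01 h12 h2 h3 h34 h45 hsum hσ5 hσ4 hSimons
end

section
/- Let λ₁ ≤ λ₂ ≤ 0 ≤ λ₃ ≤ λ₄ ≤ λ₅ ≤ λ₆ be real numbers with λ₅ > 0, λ₁+⋯+λ₆ = 6H where H > 0, σ₂(λ) = 15R with R ≥ (3/5)H², σ₄(λ) ≥ 0, σ₅(λ) ≤ 0, and σ₆(λ) = λ₁⋯λ₆ ≥ 0. Then σ₃(λ) ≥ 0. -/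
open Matrix

lemma esym_zero {n : ℕ} (x : Fin n → ℝ) : esym x 0 = 1 := by
  simp [esym]

lemma esym_eq_zero_of_lt {n r : ℕ} (x : Fin n → ℝ) (h : n < r) : esym x r = 0 := by
  rw [esym, Finset.powersetCard_eq_empty.2 (by simpa), Finset.sum_empty]

lemma esym_one {n : ℕ} (x : Fin n → ℝ) : esym x 1 = ∑ i, x i := by
  simp [esym, Finset.powersetCard_one]

lemma esym_nonneg {n : ℕ} {x : Fin n → ℝ} (hx : ∀ i, 0 ≤ x i) (r : ℕ) : 0 ≤ esym x r :=
  Finset.sum_nonneg fun _ _ => Finset.prod_nonneg fun i _ => hx i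

lemma esym_vecCons {n : ℕ} (a : ℝ) (x : Fin n → ℝ) (r : ℕ) :
    esym (vecCons a x) (r + 1) = esym x (r + 1) + a * esym x r := by
  have hmap : Finset.univ.val.map (vecCons a x) = a ::ₘ Finset.univ.val.map x := by
    simp [Fin.univ_succ, Function.comp_def]
  simp only [esym, ← Finset.esymm_map_val, hmap, Multiset.esymm, Multiset.powersetCard_cons,
    Multiset.map_add, Multiset.sum_add, Multiset.map_map, Function.comp_def, Multiset.prod_cons,
    Multiset.sum_map_mul_left]

lemma esym_vecCons_vecCons {n : ℕ} (u v : ℝ) (y : Fin n → ℝ) (r : ℕ) :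
    esym (vecCons u (vecCons v y)) (r + 2) =
      esym y (r + 2) + (u + v) * esym y (r + 1) + u * v * esym y r := by
  simp only [esym_vecCons]
  ring

lemma exists_eq_vecFour (y : Fin 4 → ℝ) : ∃ a b c d, y = ![a, b, c, d] :=
  ⟨_, _, _, _, by ext i; fin_cases i <;> rfl⟩

lemma esym_newton_fin_four (y : Fin 4 → ℝ) : 8 * esym y 2 * esym y 4 ≤ 3 * esym y 3 ^ 2 := by
  obtain ⟨a, b, c, d, rfl⟩ := exists_eq_vecFour y
  simp only [esym_vecCons, esym_zero, esym_eq_zero_of_lt _ (Nat.succ_pos _)]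
  nlinarith [sq_nonneg (a * b * (c - d)), sq_nonneg (a * c * (b - d)), sq_nonneg (a * d * (b - c)),
    sq_nonneg (b * c * (a - d)), sq_nonneg (b * d * (a - c)), sq_nonneg (c * d * (a - b))]

section
variable {u v : ℝ} {y : Fin 4 → ℝ}

lemma esym_three_nonneg_of_esym_three_pos (hu : u ≤ 0) (hv : v ≤ 0) (hy : ∀ i, 0 ≤ y i)
    (hC : 0 < esym y 3) (h4 : 0 ≤ esym (vecCons u (vecCons v y)) 4)
    (h5 : esym (vecCons u (vecCons v y)) 5 ≤ 0) : 0 ≤ esym (vecCons u (vecCons v y)) 3 := by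
  rw [esym_vecCons_vecCons] at h4 h5 ⊢
  rw [esym_eq_zero_of_lt y (by norm_num : 4 < 5)] at h5
  have hN := esym_newton_fin_four y
  have hA := esym_nonneg hy 1
  have hB := esym_nonneg hy 2
  set s := u + v
  set p := u * v
  set B := esym y 2
  set C := esym y 3
  set D := esym y 4
  have hs : s ≤ 0 := by linarith
  have hp : 0 ≤ p := mul_nonneg_of_nonpos_of_nonpos hu hv
  have hpB : p * B ≤ 3 / 8 * -s * C :=
    le_of_mul_le_mul_right (by nlinarith [mul_le_mul_of_nonneg_left hN (neg_nonneg.2 hs)]) hC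
  have hsB : -s * B ≤ 3 / 5 * C := le_of_mul_le_mul_right (by nlinarith) hC
  nlinarith

lemma esym_three_nonneg_of_esym_three_eq_zero (hu : u ≤ 0) (hv : v ≤ 0) (hy : 0 ≤ y 0)
    (hmono : Monotone y) (hC : esym y 3 = 0)
    (h12 : esym (vecCons u (vecCons v y)) 1 ^ 2 ≤ 4 * esym (vecCons u (vecCons v y)) 2) :
    0 ≤ esym (vecCons u (vecCons v y)) 3 := by
  obtain ⟨a, b, c, d, rfl⟩ := exists_eq_vecFour y
  have hab : a ≤ b := hmono (by decide : (0 : Fin 4) ≤ 1)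
  have hbc : b ≤ c := hmono (by decide : (1 : Fin 4) ≤ 2)
  have hcd : c ≤ d := hmono (by decide : (2 : Fin 4) ≤ 3)
  simp only [esym_vecCons, esym_zero, esym_eq_zero_of_lt _ (Nat.succ_pos _), mul_zero, mul_one,
    zero_add, add_zero] at hC h12 ⊢
  have ha : 0 ≤ a := hy
  have hb : 0 ≤ b := ha.trans hab
  have hc : 0 ≤ c := hb.trans hbc
  have hd : 0 ≤ d := hc.trans hcd
  obtain rfl : b = 0 := by
    have hbcd : b * c * d ≤ 0 := by
      nlinarith [mul_nonneg (mul_nonneg ha hb) hc, mul_nonneg (mul_nonneg ha hb) hd,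
        mul_nonneg (mul_nonneg ha hc) hd]
    have hb3 : b ^ 3 ≤ b * c * d := by
      nlinarith [mul_le_mul_of_nonneg_left (mul_le_mul hbc (hbc.trans hcd) hb hc) hb]
    exact pow_eq_zero_iff three_ne_zero |>.1 (le_antisymm (hb3.trans hbcd) (pow_nonneg hb 3))
  obtain rfl : a = 0 := le_antisymm hab ha
  have hsA : (u + v) * (c + d) ≤ 0 := mul_nonpos_of_nonpos_of_nonneg (by linarith) (by linarith)
  have hsq : (u - v) ^ 2 + (c - d) ^ 2 ≤ 2 * ((u + v) * (c + d)) := by nlinarith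
  obtain rfl : u = v := by nlinarith [sq_nonneg (u - v), sq_nonneg (c - d)]
  obtain rfl : c = d := by nlinarith [sq_nonneg (c - d)]
  nlinarith
end

theorem stmt_16_general (l : Fin 6 → ℝ) (H R : ℝ)
    (h01 : l 0 ≤ l 1) (h1 : l 1 ≤ 0) (h2 : 0 ≤ l 2)
    (h23 : l 2 ≤ l 3) (h34 : l 3 ≤ l 4) (h45 : l 4 ≤ l 5)
    (hsum : ∑ i, l i = 6 * H)
    (hR : esym l 2 = 15 * R) (hRge : (3 / 5) * H ^ 2 ≤ R)
    (hσ4 : 0 ≤ esym l 4) (hσ5 : esym l 5 ≤ 0) :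
    0 ≤ esym l 3 := by
  set y : Fin 4 → ℝ := ![l 2, l 3, l 4, l 5]
  have hl : l = vecCons (l 0) (vecCons (l 1) y) := by ext i; fin_cases i <;> rfl
  have hmono : Monotone y := Fin.monotone_iff_le_succ.2 fun i => by fin_cases i <;> assumption
  have hy : ∀ i, 0 ≤ y i := fun i => h2.trans (hmono (Fin.zero_le i))
  have h12 : esym l 1 ^ 2 ≤ 4 * esym l 2 := by rw [esym_one, hsum, hR]; nlinarith
  rw [hl] at h12 hσ4 hσ5 ⊢
  rcases (esym_nonneg hy 3).eq_or_lt with hC | hC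
  · exact esym_three_nonneg_of_esym_three_eq_zero (h01.trans h1) h1 h2 hmono hC.symm h12
  · exact esym_three_nonneg_of_esym_three_pos (h01.trans h1) h1 hy hC hσ4 hσ5

theorem stmt_16 (l : Fin 6 → ℝ) (H R : ℝ)
    (h01 : l 0 ≤ l 1) (h1 : l 1 ≤ 0) (h2 : 0 ≤ l 2)
    (h23 : l 2 ≤ l 3) (h34 : l 3 ≤ l 4) (h45 : l 4 ≤ l 5) (h4pos : 0 < l 4)
    (hH : 0 < H) (hsum : ∑ i, l i = 6 * H)
    (hR : esym l 2 = 15 * R) (hRge : (3 / 5) * H ^ 2 ≤ R)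
    (hσ4 : 0 ≤ esym l 4) (hσ5 : esym l 5 ≤ 0)
    (hσ6 : 0 ≤ l 0 * l 1 * l 2 * l 3 * l 4 * l 5) :
    0 ≤ esym l 3 :=
  stmt_16_general l H R h01 h1 h2 h23 h34 h45 hsum hR hRge hσ4 hσ5
end
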